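/- Let Π be a partially half-duplex protocol solving KW_f ⋄ MUX_n for some non-constant f:{0,1}^m→{0,1} and n∈ℕ, and let π₁ be a transcript of Π such that V_{π₁}≠∅ and χ(G_{π₁}) ≥ 4. Then the depth of Π is at least |π₁| + log₂ log₂ χ(G_{π₁}) − log₂ log₂ log₂ χ(G_{π₁}) − 4. -/

import Mathlib

/-! ### Basic objects: Boolean functions, matrices, compositions -/

/-- Boolean functions on `n`-bit strings. -/
abbrev BFunc (n : ℕ) : Type := (Fin n → Bool) → Bool

/-- Boolean `m × n` matrices, viewed as tuples of rows. -/
abbrev BMat (m n : ℕ) : Type := Fin m → Fin n → Bool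

/-- The column vector obtained by applying `g` to every row of `X`. -/
def gRows {m n : ℕ} (g : BFunc n) (X : BMat m n) : Fin m → Bool := fun i => g (X i)

/-- The composition `f ⋄ g` applied to a matrix `X`. -/
def compFG {m n : ℕ} (f : BFunc m) (g : BFunc n) (X : BMat m n) : Bool := f (gRows g X)

/-- A Boolean function is non-constant. -/
def NonConst {k : ℕ} (f : BFunc k) : Prop := (∃ x, f x = true) ∧ (∃ x, f x = false)

/-- A Boolean function on `n` bits is balanced if it has exactly `2^(n-1)` ones. -/
def IsBalanced {n : ℕ} (g : BFunc n) : Prop := {x | g x = true}.ncard = 2 ^ (n - 1)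

/-- The set `V₀` of balanced functions. -/
def BalancedFuncs (n : ℕ) : Set (BFunc n) := {g | IsBalanced g}

/-- The set of matrices `X` with `g(X) = a`. -/
def ginv {m n : ℕ} (g : BFunc n) (a : Fin m → Bool) : Set (BMat m n) := {X | gRows g X = a}

/-! ### De Morgan formulas and formula complexity -/

/-- De Morgan formulas over `m` variables: leaves are literals, gates are AND/OR. -/
inductive DMF (m : ℕ) : Type where
  | lit (i : Fin m) (pos : Bool)
  | and (l r : DMF m)
  | or (l r : DMF m)

namespace DMF

/-- Size of a formula: its number of leaves. -/
def size {m : ℕ} : DMF m → ℕ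
  | lit _ _ => 1
  | and l r => l.size + r.size
  | or l r => l.size + r.size

/-- Evaluation of a formula. -/
def eval {m : ℕ} : DMF m → (Fin m → Bool) → Bool
  | lit i pos, x => if pos then x i else !(x i)
  | and l r, x => l.eval x && r.eval x
  | or l r, x => l.eval x || r.eval x

end DMF

/-- `L(f)`: the minimal size of a de Morgan formula computing `f`. -/
noncomputable def Lfun {m : ℕ} (f : BFunc m) : ℕ :=
  sInf {s | ∃ φ : DMF m, φ.size = s ∧ ∀ x, φ.eval x = f x}

/-- `L(A × B)`: the minimal size of a de Morgan formula separating `A` from `B`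
(`0` if `A` or `B` is empty). -/
noncomputable def Lrect {m : ℕ} (A B : Set (Fin m → Bool)) : ℕ :=
  open Classical in
  if A.Nonempty ∧ B.Nonempty then
    sInf {s | ∃ φ : DMF m, φ.size = s ∧
      (∀ a ∈ A, φ.eval a = true) ∧ (∀ b ∈ B, φ.eval b = false)}
  else 0

/-! ### Deterministic communication protocols -/

/-- A deterministic communication protocol tree: at each internal vertex the
indicated player sends a bit determined by her input. -/
inductive Prot (X Y O : Type) : Type where
  | leaf (o : O)
  | alice (s : X → Bool) (c : Bool → Prot X Y O)
  | bob (s : Y → Bool) (c : Bool → Prot X Y O)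

namespace Prot

variable {X Y O : Type}

/-- Depth of a protocol tree. -/
def depth : Prot X Y O → ℕ
  | leaf _ => 0
  | alice _ c => 1 + max (c false).depth (c true).depth
  | bob _ c => 1 + max (c false).depth (c true).depth

/-- Running a protocol on a pair of inputs. -/
def run : Prot X Y O → X → Y → O
  | leaf o, _, _ => o
  | alice s c, x, y => (c (s x)).run x y
  | bob s c, x, y => (c (s y)).run x y

/-- A protocol solves a relation if on every input pair it outputs a valid solution. -/
def Solves (p : Prot X Y O) (R : X → Y → O → Prop) : Prop :=
  ∀ x y, R x y (p.run x y)

/-- Alice's input `x` is consistent with the transcript `tr`. -/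
def ConsA : Prot X Y O → List Bool → X → Prop
  | _, [], _ => True
  | leaf _, _ :: _, _ => False
  | alice s c, b :: tr, x => s x = b ∧ ConsA (c b) tr x
  | bob _ c, b :: tr, x => ConsA (c b) tr x

/-- Bob's input `y` is consistent with the transcript `tr`. -/
def ConsB : Prot X Y O → List Bool → Y → Prop
  | _, [], _ => True
  | leaf _, _ :: _, _ => False
  | alice _ c, b :: tr, y => ConsB (c b) tr y
  | bob s c, b :: tr, y => s y = b ∧ ConsB (c b) tr y

/-- `tr` is a (possibly partial) transcript of `p`: each player has a consistent input. -/
def IsTranscript (p : Prot X Y O) (tr : List Bool) : Prop :=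
  (∃ x, ConsA p tr x) ∧ (∃ y, ConsB p tr y)

end Prot

/-- `C(R)`: the deterministic communication complexity of a relation. -/
noncomputable def CC {X Y O : Type} (R : X → Y → O → Prop) : ℕ :=
  sInf {d | ∃ p : Prot X Y O, p.Solves R ∧ p.depth = d}

/-! ### Karchmer–Wigderson compositions and multiplexor compositions -/

/-- The relation `KW_f ⋄ KW_g`. -/
def KWdiam {m n : ℕ} (f : BFunc m) (g : BFunc n) :
    {X : BMat m n // compFG f g X = true} → {Y : BMat m n // compFG f g Y = false} →
      Fin m × Fin n → Prop :=
  fun X Y o => X.1 o.1 o.2 ≠ Y.1 o.1 o.2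

/-- The strong composition `KW_f ⊛ KW_g`. -/
def KWstrong {m n : ℕ} (f : BFunc m) (g : BFunc n) :
    {X : BMat m n // compFG f g X = true} → {Y : BMat m n // compFG f g Y = false} →
      Fin m × Fin n → Prop :=
  fun X Y o => X.1 o.1 o.2 ≠ Y.1 o.1 o.2 ∧ g (X.1 o.1) ≠ g (Y.1 o.1)

/-- Alice's inputs in the multiplexor compositions: a function `g` and a matrix `X`
with `(f ⋄ g)(X) = 1`. -/
def AliceMux (m n : ℕ) (f : BFunc m) : Type :=
  {p : BFunc n × BMat m n // compFG f p.1 p.2 = true}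

/-- Bob's inputs in the multiplexor compositions. -/
def BobMux (m n : ℕ) (f : BFunc m) : Type :=
  {p : BFunc n × BMat m n // compFG f p.1 p.2 = false}

/-- The relation `KW_f ⋄ MUX_n` (output `none` plays the role of `⊥`). -/
def MuxDiam {m n : ℕ} (f : BFunc m) :
    AliceMux m n f → BobMux m n f → Option (Fin m × Fin n) → Prop :=
  fun x y o =>
    match o with
    | none => x.1.1 ≠ y.1.1
    | some (i, j) => x.1.2 i j ≠ y.1.2 i j

/-- The strong multiplexor composition `KW_f ⊛ MUX_n`. -/
def MuxStrong {m n : ℕ} (f : BFunc m) :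
    AliceMux m n f → BobMux m n f → Option (Fin m × Fin n) → Prop :=
  fun x y o =>
    match o with
    | none => x.1.1 ≠ y.1.1
    | some (i, j) => x.1.2 i j ≠ y.1.2 i j ∧ x.1.1 (x.1.2 i) ≠ y.1.1 (y.1.2 i)

/-- The function part of Alice's multiplexor input. -/
def muxGA {m n : ℕ} {f : BFunc m} (x : AliceMux m n f) : BFunc n := x.1.1

/-- The function part of Bob's multiplexor input. -/
def muxGB {m n : ℕ} {f : BFunc m} (y : BobMux m n f) : BFunc n := y.1.1

/-! ### Half-duplex protocols with adversary -/

/-- One player's tree in a half-duplex protocol: at each internal vertex, the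
player's input determines whether she sends a bit (`some b`) or receives (`none`);
the four children are indexed by (isSend, bit). -/
inductive HDTree (X O : Type) : Type where
  | leaf (o : O)
  | node (act : X → Option Bool) (child : Bool → Bool → HDTree X O)

namespace HDTree

variable {X O : Type}

/-- The tree is full of depth `d`: every leaf is at distance exactly `d` from the root. -/
inductive IsFull : HDTree X O → ℕ → Prop where
  | leaf (o : O) : IsFull (leaf o) 0
  | node {act : X → Option Bool} {child : Bool → Bool → HDTree X O} {d : ℕ}
      (h : ∀ s b, IsFull (child s b) d) : IsFull (node act child) (d + 1)

/-- The input `x` is consistent with the transcript `tr`: there is a vertex at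
depth `|tr|` reachable on `x` along edges labeled `send(trᵢ)` or `receive(trᵢ)`. -/
def Cons : HDTree X O → List Bool → X → Prop
  | _, [], _ => True
  | leaf _, _ :: _, _ => False
  | node act child, b :: tr, x =>
      match act x with
      | some c => c = b ∧ Cons (child true b) tr x
      | none => Cons (child false b) tr x

end HDTree

/-- One round of a half-duplex execution; `ab` are the bits delivered by the
adversary in case the round is silent. -/
def hdStep {X Y O : Type} (tA : HDTree X O) (tB : HDTree Y O) (x : X) (y : Y)
    (ab : Bool × Bool) : HDTree X O × HDTree Y O :=
  match tA, tB with
  | HDTree.node actA chA, HDTree.node actB chB =>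
      ⟨match actA x with
        | some b => chA true b
        | none => chA false ((actB y).getD ab.1),
       match actB y with
        | some b => chB true b
        | none => chB false ((actA x).getD ab.2)⟩
  | tA, tB => (tA, tB)

/-- Running a half-duplex execution for `d` rounds against the adversary `adv`. -/
def hdRun {X Y O : Type} :
    ℕ → (ℕ → Bool × Bool) → HDTree X O → HDTree Y O → X → Y → HDTree X O × HDTree Y O
  | 0, _, tA, tB, _, _ => (tA, tB)
  | d + 1, adv, tA, tB, x, y =>
      hdRun d (fun i => adv (i + 1)) (hdStep tA tB x y (adv 0)).1 (hdStep tA tB x y (adv 0)).2 x y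

/-- The current round is classical: exactly one of the players sends. -/
def ClassicalRound {X Y O : Type} (tA : HDTree X O) (tB : HDTree Y O) (x : X) (y : Y) : Prop :=
  match tA, tB with
  | HDTree.node actA _, HDTree.node actB _ => (actA x).isSome ≠ (actB y).isSome
  | _, _ => True

/-- All rounds of the `d`-round execution on `(x, y)` against `adv` are classical. -/
def AllClassical {X Y O : Type} :
    ℕ → (ℕ → Bool × Bool) → HDTree X O → HDTree Y O → X → Y → Prop
  | 0, _, _, _, _, _ => True
  | d + 1, adv, tA, tB, x, y =>
      ClassicalRound tA tB x y ∧
        AllClassical d (fun i => adv (i + 1)) (hdStep tA tB x y (adv 0)).1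
          (hdStep tA tB x y (adv 0)).2 x y

/-- A half-duplex protocol of depth `d`: a pair of full 4-ary trees of depth `d`. -/
structure HDProt (X Y O : Type) (d : ℕ) where
  alice : HDTree X O
  bob : HDTree Y O
  fullA : alice.IsFull d
  fullB : bob.IsFull d

namespace HDProt

variable {X Y O : Type} {d : ℕ}

/-- The protocol solves the relation `R`: in every execution against every adversary,
both players reach leaves labeled with a common output that is valid for the inputs. -/
def Solves (P : HDProt X Y O d) (R : X → Y → O → Prop) : Prop :=
  ∀ x y adv, ∃ o : O,
    (hdRun d adv P.alice P.bob x y).1 = HDTree.leaf o ∧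
    (hdRun d adv P.alice P.bob x y).2 = HDTree.leaf o ∧ R x y o

/-- The protocol is partially half-duplex with respect to the function parts
`gA`, `gB` of the inputs: when `gA x = gB y`, all rounds are classical. -/
def PartiallyHD {G : Type} (P : HDProt X Y O d) (gA : X → G) (gB : Y → G) : Prop :=
  ∀ x y adv, gA x = gB y → AllClassical d adv P.alice P.bob x y

/-- `tr` is a (possibly partial) transcript of `P`. -/
def IsTranscript (P : HDProt X Y O d) (tr : List Bool) : Prop :=
  (∃ x, P.alice.Cons tr x) ∧ (∃ y, P.bob.Cons tr y)

end HDProt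

/-- Partially half-duplex communication complexity of a relation whose inputs carry
function parts `gA`, `gB`. -/
noncomputable def Cphd {X Y O G : Type} (R : X → Y → O → Prop)
    (gA : X → G) (gB : Y → G) : ℕ :=
  sInf {d | ∃ P : HDProt X Y O d, P.Solves R ∧ P.PartiallyHD gA gB}

/-! ### Transcript sets for multiplexor protocols (half-duplex version) -/

section MuxSetsHD

variable {m n : ℕ} {f : BFunc m} {O : Type} {d : ℕ}

/-- `X_π(g)`: the matrices `X` such that Alice's input `(g, X)` is consistent with `tr`. -/
def XpiHD (P : HDProt (AliceMux m n f) (BobMux m n f) O d) (tr : List Bool)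
    (g : BFunc n) : Set (BMat m n) :=
  {X | ∃ h : compFG f g X = true, P.alice.Cons tr ⟨(g, X), h⟩}

/-- `Y_π(g)`: the matrices `Y` such that Bob's input `(g, Y)` is consistent with `tr`. -/
def YpiHD (P : HDProt (AliceMux m n f) (BobMux m n f) O d) (tr : List Bool)
    (g : BFunc n) : Set (BMat m n) :=
  {Y | ∃ h : compFG f g Y = false, P.bob.Cons tr ⟨(g, Y), h⟩}

/-- `A_π(g)`: the strings `a ∈ f⁻¹(1)` with `X_π(g, a) ≠ ∅`. -/
def ApiHD (P : HDProt (AliceMux m n f) (BobMux m n f) O d) (tr : List Bool)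
    (g : BFunc n) : Set (Fin m → Bool) :=
  {a | f a = true ∧ (XpiHD P tr g ∩ ginv g a).Nonempty}

/-- `B_π(g)`: the strings `b ∈ f⁻¹(0)` with `Y_π(g, b) ≠ ∅`. -/
def BpiHD (P : HDProt (AliceMux m n f) (BobMux m n f) O d) (tr : List Bool)
    (g : BFunc n) : Set (Fin m → Bool) :=
  {b | f b = false ∧ (YpiHD P tr g ∩ ginv g b).Nonempty}

/-- `V_π` (version via nonempty `X_π(g)` and `Y_π(g)`). -/
def VpiHD (P : HDProt (AliceMux m n f) (BobMux m n f) O d) (tr : List Bool) :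
    Set (BFunc n) :=
  {g | (XpiHD P tr g).Nonempty ∧ (YpiHD P tr g).Nonempty}

/-- `V_π` (version via nonempty `A_π(g)` and `B_π(g)`). -/
def VpiABHD (P : HDProt (AliceMux m n f) (BobMux m n f) O d) (tr : List Bool) :
    Set (BFunc n) :=
  {g | (ApiHD P tr g).Nonempty ∧ (BpiHD P tr g).Nonempty}

/-- A transcript `tr` of `P` is `γ`-alive (with the universal constant `κ = 8`). -/
def AliveHD (γ : ℝ) (P : HDProt (AliceMux m n f) (BobMux m n f) O d)
    (tr : List Bool) : Prop :=
  P.IsTranscript tr ∧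
  ∃ V : Set (BFunc n), V ⊆ VpiABHD P tr ∧ (∀ g ∈ V, IsBalanced g) ∧
    ((2 : ℝ) ^ (-(m : ℝ)) * ((BalancedFuncs n).ncard : ℝ) ≤ (V.ncard : ℝ)) ∧
    (∀ g ∈ V,
      (1 - γ) * m + 8 * Real.logb 2 m + 8 ≤
        Real.logb 2 (Lrect (ApiHD P tr g) (BpiHD P tr g))) ∧
    (∀ g ∈ V, ∀ a ∈ ApiHD P tr g,
      (2 : ℝ) ^ (-γ * m + 1) * ((ginv g a).ncard : ℝ) ≤
        ((XpiHD P tr g ∩ ginv g a).ncard : ℝ)) ∧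
    (∀ g ∈ V, ∀ b ∈ BpiHD P tr g,
      (2 : ℝ) ^ (-γ * m + 1) * ((ginv g b).ncard : ℝ) ≤
        ((YpiHD P tr g ∩ ginv g b).ncard : ℝ))

/-- The weak intersection property for two functions `gA`, `gB`. -/
def WeakIntersectHD (P : HDProt (AliceMux m n f) (BobMux m n f) O d) (tr : List Bool)
    (gA gB : BFunc n) : Prop :=
  ∃ X ∈ XpiHD P tr gA, ∃ Y ∈ YpiHD P tr gB,
    ∀ i : Fin m, gA (X i) ≠ gB (Y i) → X i = Y i

/-- The characteristic graph of `tr` for `KW_f ⋄ MUX_n`, on vertex set `V`. -/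
def charGraphDiamHD (P : HDProt (AliceMux m n f) (BobMux m n f) O d) (tr : List Bool)
    (V : Set (BFunc n)) : SimpleGraph ↥V where
  Adj gA gB := gA ≠ gB ∧
    ((XpiHD P tr ↑gA ∩ YpiHD P tr ↑gB).Nonempty ∨
      (XpiHD P tr ↑gB ∩ YpiHD P tr ↑gA).Nonempty)
  symm := by
    constructor
    rintro a b ⟨hne, h⟩
    exact ⟨hne.symm, h.symm⟩
  loopless := by
    constructor
    rintro a ⟨hne, -⟩
    exact hne rfl

/-- The characteristic graph of `tr` for `KW_f ⊛ MUX_n`, on vertex set `V`. -/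
def charGraphStrongHD (P : HDProt (AliceMux m n f) (BobMux m n f) O d) (tr : List Bool)
    (V : Set (BFunc n)) : SimpleGraph ↥V where
  Adj gA gB := gA ≠ gB ∧
    (WeakIntersectHD P tr ↑gA ↑gB ∨ WeakIntersectHD P tr ↑gB ↑gA)
  symm := by
    constructor
    rintro a b ⟨hne, h⟩
    exact ⟨hne.symm, h.symm⟩
  loopless := by
    constructor
    rintro a ⟨hne, -⟩
    exact hne rfl

end MuxSetsHD

/-! ### Transcript sets for multiplexor protocols (standard deterministic version) -/

section MuxSetsP

variable {m n : ℕ} {f : BFunc m} {O : Type}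

/-- `X_π(g)` for a standard deterministic protocol. -/
def XpiP (p : Prot (AliceMux m n f) (BobMux m n f) O) (tr : List Bool)
    (g : BFunc n) : Set (BMat m n) :=
  {X | ∃ h : compFG f g X = true, Prot.ConsA p tr ⟨(g, X), h⟩}

/-- `Y_π(g)` for a standard deterministic protocol. -/
def YpiP (p : Prot (AliceMux m n f) (BobMux m n f) O) (tr : List Bool)
    (g : BFunc n) : Set (BMat m n) :=
  {Y | ∃ h : compFG f g Y = false, Prot.ConsB p tr ⟨(g, Y), h⟩}

/-- `A_π(g)` for a standard deterministic protocol. -/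
def ApiP (p : Prot (AliceMux m n f) (BobMux m n f) O) (tr : List Bool)
    (g : BFunc n) : Set (Fin m → Bool) :=
  {a | f a = true ∧ (XpiP p tr g ∩ ginv g a).Nonempty}

/-- `B_π(g)` for a standard deterministic protocol. -/
def BpiP (p : Prot (AliceMux m n f) (BobMux m n f) O) (tr : List Bool)
    (g : BFunc n) : Set (Fin m → Bool) :=
  {b | f b = false ∧ (YpiP p tr g ∩ ginv g b).Nonempty}

/-- `V_π` (version via nonempty `X_π(g)` and `Y_π(g)`), standard protocols. -/
def VpiPset (p : Prot (AliceMux m n f) (BobMux m n f) O) (tr : List Bool) :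
    Set (BFunc n) :=
  {g | (XpiP p tr g).Nonempty ∧ (YpiP p tr g).Nonempty}

/-- `V_π` (version via nonempty `A_π(g)` and `B_π(g)`), standard protocols. -/
def VpiABP (p : Prot (AliceMux m n f) (BobMux m n f) O) (tr : List Bool) :
    Set (BFunc n) :=
  {g | (ApiP p tr g).Nonempty ∧ (BpiP p tr g).Nonempty}

/-- `γ`-alive transcripts (with `κ = 8`), standard protocols. -/
def AliveP (γ : ℝ) (p : Prot (AliceMux m n f) (BobMux m n f) O)
    (tr : List Bool) : Prop :=
  p.IsTranscript tr ∧
  ∃ V : Set (BFunc n), V ⊆ VpiABP p tr ∧ (∀ g ∈ V, IsBalanced g) ∧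
    ((2 : ℝ) ^ (-(m : ℝ)) * ((BalancedFuncs n).ncard : ℝ) ≤ (V.ncard : ℝ)) ∧
    (∀ g ∈ V,
      (1 - γ) * m + 8 * Real.logb 2 m + 8 ≤
        Real.logb 2 (Lrect (ApiP p tr g) (BpiP p tr g))) ∧
    (∀ g ∈ V, ∀ a ∈ ApiP p tr g,
      (2 : ℝ) ^ (-γ * m + 1) * ((ginv g a).ncard : ℝ) ≤
        ((XpiP p tr g ∩ ginv g a).ncard : ℝ)) ∧
    (∀ g ∈ V, ∀ b ∈ BpiP p tr g,
      (2 : ℝ) ^ (-γ * m + 1) * ((ginv g b).ncard : ℝ) ≤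
        ((YpiP p tr g ∩ ginv g b).ncard : ℝ))

/-- The weak intersection property, standard protocols. -/
def WeakIntersectP (p : Prot (AliceMux m n f) (BobMux m n f) O) (tr : List Bool)
    (gA gB : BFunc n) : Prop :=
  ∃ X ∈ XpiP p tr gA, ∃ Y ∈ YpiP p tr gB,
    ∀ i : Fin m, gA (X i) ≠ gB (Y i) → X i = Y i

/-- The characteristic graph for `KW_f ⋄ MUX_n`, standard protocols. -/
def charGraphDiamP (p : Prot (AliceMux m n f) (BobMux m n f) O) (tr : List Bool)
    (V : Set (BFunc n)) : SimpleGraph ↥V where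
  Adj gA gB := gA ≠ gB ∧
    ((XpiP p tr ↑gA ∩ YpiP p tr ↑gB).Nonempty ∨
      (XpiP p tr ↑gB ∩ YpiP p tr ↑gA).Nonempty)
  symm := by
    constructor
    rintro a b ⟨hne, h⟩
    exact ⟨hne.symm, h.symm⟩
  loopless := by
    constructor
    rintro a ⟨hne, -⟩
    exact hne rfl

/-- The characteristic graph for `KW_f ⊛ MUX_n`, standard protocols. -/
def charGraphStrongP (p : Prot (AliceMux m n f) (BobMux m n f) O) (tr : List Bool)
    (V : Set (BFunc n)) : SimpleGraph ↥V where
  Adj gA gB := gA ≠ gB ∧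
    (WeakIntersectP p tr ↑gA ↑gB ∨ WeakIntersectP p tr ↑gB ↑gA)
  symm := by
    constructor
    rintro a b ⟨hne, h⟩
    exact ⟨hne.symm, h.symm⟩
  loopless := by
    constructor
    rintro a ⟨hne, -⟩
    exact hne rfl

end MuxSetsP

/-! ### Prefix-thick sets, branching structures and winning sets -/

/-- A set of strings indexed by a linearly ordered set `I` is prefix thick with
degree `t`: it has a nonempty subset whose prefix tree has minimum degree
greater than `t` (the children of the depth-`i` vertex given by the prefix of
`x ∈ S'` are the possible values of the next coordinate among elements of `S'`
agreeing with `x` on all earlier coordinates). -/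
def RowThick {I A : Type} [LT I] (S : Set (I → A)) (t : ℝ) : Prop :=
  ∃ S' : Set (I → A), S' ⊆ S ∧ S'.Nonempty ∧ ∀ x ∈ S', ∀ i : I,
    t < (({a : A | ∃ y ∈ S', (∀ j, j < i → y j = x j) ∧ y i = a}).ncard : ℝ)

/-- Prefix thickness for strings over (possibly different) alphabets `A i`,
with a separate degree bound `t i` at each depth. -/
def DepThick {m : ℕ} {A : Fin m → Type} (S : Set (∀ i, A i)) (t : Fin m → ℝ) : Prop :=
  ∃ S' : Set (∀ i, A i), S' ⊆ S ∧ S'.Nonempty ∧ ∀ x ∈ S', ∀ i : Fin m,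
    t i < (({a : A i | ∃ y ∈ S', (∀ j, j < i → y j = x j) ∧ y i = a}).ncard : ℝ)

/-- The restriction of a set of matrices to the rows in `I` (ordered as in `[m]`). -/
def restrictRows {m n : ℕ} (I : Finset (Fin m)) (S : Set (BMat m n)) :
    Set (↥I → (Fin n → Bool)) :=
  (fun X => fun i : ↥I => X i.1) '' S

/-- The restriction of a set of strings to the coordinates in `I` (ordered as in `[m]`). -/
def restrictStr {m : ℕ} {A : Type} (I : Finset (Fin m)) (S : Set (Fin m → A)) :
    Set (↥I → A) :=
  (fun x => fun i : ↥I => x i.1) '' S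

/-- `w` is a branching structure of `S`: some nonempty subset `S' ⊆ S` has a prefix
tree in which every vertex at depth `i` has exactly `w i` children. -/
def IsBranching {m : ℕ} {A : Type} (S : Set (Fin m → A)) (w : Fin m → ℕ) : Prop :=
  ∃ S' : Set (Fin m → A), S' ⊆ S ∧ S'.Nonempty ∧ ∀ x ∈ S', ∀ i : Fin m,
    ({a : A | ∃ y ∈ S', (∀ j, j < i → y j = x j) ∧ y i = a}).ncard = w i

/-- The winning set of `S`: the set of its branching structures. -/
def WinSet {m : ℕ} {A : Type} (S : Set (Fin m → A)) : Set (Fin m → ℕ) :=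
  {w | IsBranching S w}

/-! ### Non-deterministic communication complexity -/

/-- There is a non-deterministic protocol for the total function `f` with
witness set of size `k`. -/
def NDProtFor {X Y : Type} (f : X × Y → Bool) (k : ℕ) : Prop :=
  ∃ a : X → Fin k → Bool, ∃ b : Y → Fin k → Bool,
    ∀ x y, f (x, y) = true ↔ ∃ w, a x w = true ∧ b y w = true

/-- The minimal size of a (nonempty) witness set of a non-deterministic protocol for `f`;
the non-deterministic communication complexity `NCC(f)` is its base-2 logarithm. -/
noncomputable def NCCcard {X Y : Type} (f : X × Y → Bool) : ℕ :=
  sInf {k | 1 ≤ k ∧ NDProtFor f k}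

/-- A non-deterministic protocol for the partial problem `GraphIneq_G` with witness
set of size `k`: adjacent pairs are accepted, equal pairs are rejected. -/
def GraphIneqProt {V : Type} (G : SimpleGraph V) (k : ℕ) : Prop :=
  ∃ a : V → Fin k → Bool, ∃ b : V → Fin k → Bool,
    (∀ u v, G.Adj u v → ∃ w, a u w = true ∧ b v w = true) ∧
    (∀ v, ¬ ∃ w, a v w = true ∧ b v w = true)

/-- The minimal witness-set size of a non-deterministic protocol for `GraphIneq_G`;
`NCC(GraphIneq_G)` is its base-2 logarithm. -/
noncomputable def NCCgraphIneqCard {V : Type} (G : SimpleGraph V) : ℕ :=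
  sInf {k | 1 ≤ k ∧ GraphIneqProt G k}

/-- `S` is an independent set of `G`. -/
def IndepIn {V : Type} (G : SimpleGraph V) (S : Set V) : Prop :=
  ∀ u ∈ S, ∀ v ∈ S, ¬ G.Adj u v

/-!
Write `D = d - |π₁|`. Colour `g ∈ V_{π₁}` by the set of pairs `(s, k)` with `|s| ≤ D` such that
for some `X`, Alice's input `(g, X)` follows `π₁ s` and then stands at the leaf `⊥` (`k = none`),
or at a vertex where she sends or receives (`k = some b`); Bob's witnesses are defined alike.

If `Z ∈ X_{π₁}(g) ∩ Y_{π₁}(g')`, the only valid output on `((g, Z), (g', Z))` is `⊥`. Let the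
adversary echo `π₁` and follow the execution until its first non-classical round: this gives a
pair that is a witness for Alice at `g` and for Bob at `g'`. No pair is a witness for both players
at the same `g`: with the adversary echoing `π₁ s`, the execution would either end at `⊥`, which is
invalid when `g_A = g_B`, or meet a silent or wasted round, which partial half-duplexity forbids.
Hence adjacent vertices get different colours. There are fewer than `6 · 2^D` pairs, so
`χ ≤ 2^(2^(D+3))` and `log log χ ≤ D + 3`.
-/


namespace HDTree

variable {X O : Type}

def descend : HDTree X O → List Bool → X → HDTree X O
  | t, [], _ => t
  | leaf o, _ :: _, _ => leaf o
  | node act child, b :: s, x => descend (child (act x).isSome b) s x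

/-- `k = none`: the tree is the leaf `o`; `k = some b`: it is a vertex at which the player
sends (`b = true`) or receives (`b = false`) on input `x`. -/
def StopsAt : HDTree X O → O → X → Option Bool → Prop
  | leaf o', o, _, none => o' = o
  | node act _, _, x, some b => (act x).isSome = b
  | _, _, _, _ => False

def StopsAfter (t : HDTree X O) (o : O) (x : X) (s : List Bool) (k : Option Bool) : Prop :=
  t.Cons s x ∧ (t.descend s x).StopsAt o x k

@[simp]
theorem descend_leaf (o : O) (s : List Bool) (x : X) : (leaf o).descend s x = leaf o := by
  cases s <;> rfl

theorem cons_node_cons {act : X → Option Bool} {child : Bool → Bool → HDTree X O} {b : Bool}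
    {s : List Bool} {x : X} :
    (node act child).Cons (b :: s) x ↔
      (∀ c, act x = some c → c = b) ∧ (child (act x).isSome b).Cons s x := by
  simp only [Cons]
  cases act x <;> simp

theorem cons_append {t : HDTree X O} {s s' : List Bool} {x : X} :
    t.Cons (s ++ s') x ↔ t.Cons s x ∧ (t.descend s x).Cons s' x := by
  induction s generalizing t with
  | nil => simp [Cons, descend]
  | cons b s ih =>
    cases t with
    | leaf o => simp [Cons]
    | node act child => simp only [List.cons_append, cons_node_cons, ih, descend, and_assoc]

theorem descend_append (t : HDTree X O) (s s' : List Bool) (x : X) :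
    t.descend (s ++ s') x = (t.descend s x).descend s' x := by
  induction s generalizing t with
  | nil => simp [descend]
  | cons b s ih =>
    cases t with
    | leaf o => simp
    | node act child => exact ih _

theorem stopsAfter_node_cons {act : X → Option Bool} {child : Bool → Bool → HDTree X O}
    {o : O} {x : X} {b : Bool} {s : List Bool} {k : Option Bool} :
    (node act child).StopsAfter o x (b :: s) k ↔
      (∀ c, act x = some c → c = b) ∧ (child (act x).isSome b).StopsAfter o x s k := by
  simp only [StopsAfter, cons_node_cons, descend, and_assoc]

theorem stopsAfter_append {t : HDTree X O} {o : O} {x : X} {s s' : List Bool}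
    {k : Option Bool} :
    t.StopsAfter o x (s ++ s') k ↔ t.Cons s x ∧ (t.descend s x).StopsAfter o x s' k := by
  simp only [StopsAfter, cons_append, descend_append, and_assoc]

theorem IsFull.length_le_of_cons {t : HDTree X O} {N : ℕ} (hf : t.IsFull N) {s : List Bool}
    {x : X} (hc : t.Cons s x) : s.length ≤ N := by
  induction hf generalizing s with
  | leaf o => cases s <;> simp_all [Cons]
  | node h ih =>
    cases s with
    | nil => simp
    | cons b s => simpa using ih _ _ (cons_node_cons.1 hc).2

theorem IsFull.descend {t : HDTree X O} {N : ℕ} (hf : t.IsFull N) (s : List Bool) (x : X) :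
    (t.descend s x).IsFull (N - s.length) := by
  induction hf generalizing s with
  | leaf o => simpa using IsFull.leaf (X := X) o
  | node h ih =>
    cases s with
    | nil => simpa [HDTree.descend] using IsFull.node h
    | cons b s => simpa [HDTree.descend] using ih _ _ s

theorem IsFull.eq_zero_of_stopsAt_none {t : HDTree X O} {N : ℕ} (hf : t.IsFull N) {o : O}
    {x : X} (h : t.StopsAt o x none) : N = 0 := by
  cases hf
  · rfl
  · simp [StopsAt] at h

theorem IsFull.exists_eq_succ_of_stopsAt_some {t : HDTree X O} {N : ℕ} (hf : t.IsFull N) {o : O}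
    {x : X} {b : Bool} (h : t.StopsAt o x (some b)) : ∃ N', N = N' + 1 := by
  cases hf
  · simp [StopsAt] at h
  · exact ⟨_, rfl⟩

theorem stopsAt_none {t : HDTree X O} {o : O} {x : X} : t.StopsAt o x none ↔ t = leaf o := by
  cases t <;> simp [StopsAt]

end HDTree

section Execution

variable {X Y O : Type}

open HDTree

def echo (s : List Bool) (i : ℕ) : Bool × Bool := (s.getD i false, s.getD i false)

theorem hdRun_add (a b : ℕ) (adv : ℕ → Bool × Bool) (tA : HDTree X O) (tB : HDTree Y O)
    (x : X) (y : Y) :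
    hdRun (a + b) adv tA tB x y =
      hdRun b (fun i => adv (i + a)) (hdRun a adv tA tB x y).1 (hdRun a adv tA tB x y).2 x y := by
  induction a generalizing adv tA tB with
  | zero => simp [hdRun]
  | succ a ih => rw [Nat.add_right_comm]; exact ih _ _ _

theorem AllClassical.of_add {a b : ℕ} {adv : ℕ → Bool × Bool} {tA : HDTree X O}
    {tB : HDTree Y O} {x : X} {y : Y} (h : AllClassical (a + b) adv tA tB x y) :
    AllClassical b (fun i => adv (i + a)) (hdRun a adv tA tB x y).1
      (hdRun a adv tA tB x y).2 x y := by
  induction a generalizing adv tA tB with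
  | zero => simpa [hdRun] using h
  | succ a ih => rw [Nat.add_right_comm] at h; exact ih h.2

theorem hdStep_of_cons {actA : X → Option Bool} {chA : Bool → Bool → HDTree X O}
    {actB : Y → Option Bool} {chB : Bool → Bool → HDTree Y O} {b : Bool} {s s' : List Bool}
    {x : X} {y : Y} (hx : (node actA chA).Cons (b :: s) x) (hy : (node actB chB).Cons (b :: s') y) :
    hdStep (node actA chA) (node actB chB) x y (b, b) =
      (chA (actA x).isSome b, chB (actB y).isSome b) := by
  rw [cons_node_cons] at hx hy
  cases hA : actA x <;> cases hB : actB y <;> simp_all [hdStep]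

theorem exists_hdStep_of_classical {actA : X → Option Bool} {chA : Bool → Bool → HDTree X O}
    {actB : Y → Option Bool} {chB : Bool → Bool → HDTree Y O} {x : X} {y : Y}
    (h : (actA x).isSome ≠ (actB y).isSome) (ab : Bool × Bool) :
    ∃ b, hdStep (node actA chA) (node actB chB) x y ab =
        (chA (actA x).isSome b, chB (actB y).isSome b) ∧
      (∀ c, actA x = some c → c = b) ∧ (∀ c, actB y = some c → c = b) := by
  cases hA : actA x with
  | some a => cases hB : actB y <;> simp_all [hdStep]
  | none =>
    cases hB : actB y with
    | some b => exact ⟨b, by simp [hdStep, hA, hB]⟩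
    | none => simp_all

theorem hdRun_echo {tA : HDTree X O} {tB : HDTree Y O} {s : List Bool} {x : X} {y : Y}
    (hx : tA.Cons s x) (hy : tB.Cons s y) :
    hdRun s.length (echo s) tA tB x y = (tA.descend s x, tB.descend s y) := by
  induction s generalizing tA tB with
  | nil => simp [hdRun, descend]
  | cons b s ih =>
    cases tA with
    | leaf => simp [Cons] at hx
    | node actA chA =>
      cases tB with
      | leaf => simp [Cons] at hy
      | node actB chB =>
        have hshift : (fun i => echo (b :: s) (i + 1)) = echo s := rfl
        simp only [List.length_cons, hdRun, hshift]
        rw [show echo (b :: s) 0 = (b, b) from rfl, hdStep_of_cons hx hy]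
        exact ih (cons_node_cons.1 hx).2 (cons_node_cons.1 hy).2

theorem not_classicalRound_of_stopsAt {tA : HDTree X O} {tB : HDTree Y O} {o : O} {x : X}
    {y : Y} {b : Bool} (hx : tA.StopsAt o x (some b)) (hy : tB.StopsAt o y (some b)) :
    ¬ClassicalRound tA tB x y := by
  cases tA <;> cases tB <;> simp_all [StopsAt, ClassicalRound]

/-- Follow an execution as long as its rounds are classical: it either ends at the common leaf or
reaches a silent or wasted round, and both players followed the same bits up to there. -/
theorem exists_stopsAfter_of_hdRun {N : ℕ} {tA : HDTree X O} {tB : HDTree Y O}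
    (hA : tA.IsFull N) (hB : tB.IsFull N) {adv : ℕ → Bool × Bool} {x : X} {y : Y} {o : O}
    (hrun : hdRun N adv tA tB x y = (leaf o, leaf o)) :
    ∃ s k, tA.StopsAfter o x s k ∧ tB.StopsAfter o y s k := by
  induction N generalizing tA tB adv with
  | zero =>
    cases hrun
    exact ⟨[], none, ⟨trivial, rfl⟩, ⟨trivial, rfl⟩⟩
  | succ N ih =>
    cases hA with | node hA =>
    cases hB with | node hB =>
    rename_i actA chA actB chB
    by_cases hcl : (actA x).isSome = (actB y).isSome
    · exact ⟨[], some (actA x).isSome, ⟨trivial, rfl⟩, ⟨trivial, hcl.symm⟩⟩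
    · obtain ⟨b, hstep, hbA, hbB⟩ :=
        exists_hdStep_of_classical (chA := chA) (chB := chB) hcl (adv 0)
      rw [hdRun, hstep] at hrun
      obtain ⟨s, k, hsA, hsB⟩ := ih (hA _ b) (hB _ b) hrun
      exact ⟨b :: s, k, stopsAfter_node_cons.2 ⟨hbA, hsA⟩, stopsAfter_node_cons.2 ⟨hbB, hsB⟩⟩

end Execution

namespace HDProt

variable {X Y O : Type} {d : ℕ} {P : HDProt X Y O d} {R : X → Y → O → Prop}

open HDTree

/-- On inputs consistent with `tr`, the adversary echoing `tr` lets the execution follow `tr`;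
after that it is followed until it stops being classical. -/
theorem exists_stopsAfter_append (hsol : P.Solves R) {tr : List Bool} {x : X} {y : Y}
    (hx : P.alice.Cons tr x) (hy : P.bob.Cons tr y) :
    ∃ o, R x y o ∧
      ∃ s k, P.alice.StopsAfter o x (tr ++ s) k ∧ P.bob.StopsAfter o y (tr ++ s) k := by
  obtain ⟨r, rfl⟩ := Nat.exists_eq_add_of_le (P.fullA.length_le_of_cons hx)
  obtain ⟨o, hoA, hoB, hR⟩ := hsol x y (echo tr)
  rw [hdRun_add, hdRun_echo hx hy] at hoA hoB
  obtain ⟨s, k, hA, hB⟩ := exists_stopsAfter_of_hdRun (by simpa using P.fullA.descend tr x)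
    (by simpa using P.fullB.descend tr y) (Prod.ext hoA hoB)
  exact ⟨o, hR, s, k, stopsAfter_append.2 ⟨hx, hA⟩, stopsAfter_append.2 ⟨hy, hB⟩⟩

/-- If both players can follow `u` and stop there in the same way, then with the adversary
echoing `u` the round after `u` is silent or wasted, which a partially half-duplex protocol
forbids when the function parts agree; so the execution ends right after `u`, at the leaf `o`. -/
theorem rel_of_stopsAfter {G : Type} {gA : X → G} {gB : Y → G} (hsol : P.Solves R)
    (hphd : P.PartiallyHD gA gB) {x : X} {y : Y} (hg : gA x = gB y) {o : O} {u : List Bool}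
    {k : Option Bool} (hx : P.alice.StopsAfter o x u k) (hy : P.bob.StopsAfter o y u k) :
    R x y o := by
  obtain ⟨⟨hcA, hA⟩, ⟨hcB, hB⟩⟩ := And.intro hx hy
  obtain ⟨r, rfl⟩ := Nat.exists_eq_add_of_le (P.fullA.length_le_of_cons hcA)
  have hfullA : (P.alice.descend u x).IsFull r := by simpa using P.fullA.descend u x
  cases k with
  | none =>
    obtain rfl := hfullA.eq_zero_of_stopsAt_none hA
    obtain ⟨o', hoA, -, hR⟩ := hsol x y (echo u)
    rw [hdRun_add, hdRun_echo hcA hcB, hdRun, stopsAt_none.1 hA] at hoA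
    cases hoA
    exact hR
  | some b =>
    obtain ⟨r, rfl⟩ := hfullA.exists_eq_succ_of_stopsAt_some hA
    have hcl := (hphd x y (echo u) hg).of_add
    rw [hdRun_echo hcA hcB] at hcl
    exact absurd hcl.1 (not_classicalRound_of_stopsAt hA hB)

end HDProt

theorem ncard_setOf_length_le_lt {α : Type} [Fintype α] (hα : 2 ≤ Fintype.card α) (D : ℕ) :
    {l : List α | l.length ≤ D}.ncard < Fintype.card α ^ (D + 1) := by
  have hunion : {l : List α | l.length ≤ D} = ⋃ k ∈ Finset.range (D + 1), {l | l.length = k} := by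
    ext l; simp
  have hcard (k : ℕ) : {l : List α | l.length = k}.ncard = Fintype.card α ^ k := by
    rw [← Nat.card_coe_set_eq, ← card_vector, ← Nat.card_eq_fintype_card]
    rfl
  calc {l : List α | l.length ≤ D}.ncard
      ≤ ∑ k ∈ Finset.range (D + 1), {l : List α | l.length = k}.ncard :=
        hunion ▸ Finset.set_ncard_biUnion_le _ _
    _ = ∑ k ∈ Finset.range (D + 1), Fintype.card α ^ k := by simp only [hcard]
    _ < Fintype.card α ^ (D + 1) := Nat.geomSum_lt hα (by simp)

theorem SimpleGraph.Coloring.chromaticNumber_le_two_pow {V T : Type} {G : SimpleGraph V}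
    [Finite T] (C : G.Coloring (Set T)) : G.chromaticNumber ≤ (2 ^ Nat.card T : ℕ) := by
  classical
  have := Fintype.ofFinite T
  simpa [Nat.card_eq_fintype_card, Fintype.card_set] using C.colorable.chromaticNumber_le

open Real in
theorem logb_logb_le_of_le_two_pow_two_pow {c : ℝ} {k : ℕ} (hc : 1 < c) (h : c ≤ 2 ^ 2 ^ k) :
    logb 2 (logb 2 c) ≤ k := by
  have hlog : logb 2 c ≤ 2 ^ k := by
    simpa [Real.logb_pow] using logb_le_logb_of_le one_lt_two (by linarith) h
  simpa [Real.logb_pow] using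
    logb_le_logb_of_le one_lt_two (logb_pos one_lt_two hc) hlog

open Real in
theorem logb_logb_logb_nonneg {c : ℝ} (hc : 4 ≤ c) : 0 ≤ logb 2 (logb 2 (logb 2 c)) := by
  have h2 : 2 ≤ logb 2 c := by
    rw [le_logb_iff_rpow_le one_lt_two (by linarith)]; norm_num; linarith
  refine logb_nonneg one_lt_two ?_
  rw [le_logb_iff_rpow_le one_lt_two (by linarith)]; norm_num; linarith

section Multiplexor

variable {m n : ℕ} {f : BFunc m} {d : ℕ}
  {P : HDProt (AliceMux m n f) (BobMux m n f) (Option (Fin m × Fin n)) d} {tr : List Bool}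

def aliceStops (P : HDProt (AliceMux m n f) (BobMux m n f) (Option (Fin m × Fin n)) d)
    (tr : List Bool) (g : BFunc n) : Set (List Bool × Option Bool) :=
  {w | ∃ x, muxGA x = g ∧ P.alice.StopsAfter none x (tr ++ w.1) w.2}

def bobStops (P : HDProt (AliceMux m n f) (BobMux m n f) (Option (Fin m × Fin n)) d)
    (tr : List Bool) (g : BFunc n) : Set (List Bool × Option Bool) :=
  {w | ∃ y, muxGB y = g ∧ P.bob.StopsAfter none y (tr ++ w.1) w.2}

/-- A common matrix leaves `⊥` as the only valid output. -/
theorem exists_mem_aliceStops_bobStops (hsol : P.Solves (MuxDiam f)) {g g' : BFunc n}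
    {Z : BMat m n} (hX : Z ∈ XpiHD P tr g) (hY : Z ∈ YpiHD P tr g') :
    ∃ w ∈ aliceStops P tr g, w ∈ bobStops P tr g' := by
  obtain ⟨hX, hcX⟩ := hX
  obtain ⟨hY, hcY⟩ := hY
  obtain ⟨o, hR, s, k, hA, hB⟩ := HDProt.exists_stopsAfter_append hsol hcX hcY
  cases o with
  | none => exact ⟨(s, k), ⟨_, rfl, hA⟩, ⟨_, rfl, hB⟩⟩
  | some ij => exact absurd rfl hR

theorem disjoint_aliceStops_bobStops (hsol : P.Solves (MuxDiam f))
    (hphd : P.PartiallyHD muxGA muxGB) (g : BFunc n) :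
    Disjoint (aliceStops P tr g) (bobStops P tr g) :=
  Set.disjoint_left.2 fun _ ⟨x, hx, hA⟩ ⟨y, hy, hB⟩ =>
    have hg : muxGA x = muxGB y := hx.trans hy.symm
    HDProt.rel_of_stopsAfter (R := MuxDiam f) hsol hphd hg hA hB hg

theorem length_le_of_mem_aliceStops {g : BFunc n} {w : List Bool × Option Bool}
    (hw : w ∈ aliceStops P tr g) : w.1.length ≤ d - tr.length := by
  obtain ⟨x, -, hcons, -⟩ := hw
  have := P.fullA.length_le_of_cons hcons
  rw [List.length_append] at this
  omega

def aliceStopsColor (P : HDProt (AliceMux m n f) (BobMux m n f) (Option (Fin m × Fin n)) d)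
    (tr : List Bool) (g : BFunc n) :
    Set (↥{l : List Bool | l.length ≤ d - tr.length} × Option Bool) :=
  {w | (w.1.1, w.2) ∈ aliceStops P tr g}

theorem aliceStopsColor_ne (hsol : P.Solves (MuxDiam f)) (hphd : P.PartiallyHD muxGA muxGB)
    {g g' : BFunc n} {Z : BMat m n} (hX : Z ∈ XpiHD P tr g) (hY : Z ∈ YpiHD P tr g') :
    aliceStopsColor P tr g ≠ aliceStopsColor P tr g' := by
  intro heq
  obtain ⟨w, hwA, hwB⟩ := exists_mem_aliceStops_bobStops hsol hX hY
  have hw : (⟨⟨w.1, length_le_of_mem_aliceStops hwA⟩, w.2⟩ :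
      ↥{l : List Bool | l.length ≤ d - tr.length} × Option Bool) ∈ aliceStopsColor P tr g := hwA
  rw [heq] at hw
  exact Set.disjoint_left.1 (disjoint_aliceStops_bobStops hsol hphd g') hw hwB

variable (tr) in
theorem chromaticNumber_charGraphDiamHD_le (hsol : P.Solves (MuxDiam f))
    (hphd : P.PartiallyHD muxGA muxGB) (V : Set (BFunc n)) :
    (charGraphDiamHD P tr V).chromaticNumber ≤ (2 ^ 2 ^ (d - tr.length + 3) : ℕ) := by
  let C : (charGraphDiamHD P tr V).Coloring _ := SimpleGraph.Coloring.mk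
    (fun g => aliceStopsColor P tr g) fun ⟨_, hadj⟩ => hadj.elim
      (fun ⟨_, hX, hY⟩ => aliceStopsColor_ne hsol hphd hX hY)
      (fun ⟨_, hX, hY⟩ => (aliceStopsColor_ne hsol hphd hX hY).symm)
  have : Finite ↥{l : List Bool | l.length ≤ d - tr.length} :=
    (List.finite_length_le Bool _).to_subtype
  refine C.chromaticNumber_le_two_pow.trans (Nat.cast_le.2 (Nat.pow_le_pow_right two_pos ?_))
  have hlists := ncard_setOf_length_le_lt (α := Bool) le_rfl (d - tr.length)
  rw [Nat.card_prod, Nat.card_coe_set_eq, Nat.card_eq_fintype_card (α := Option Bool)]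
  simp only [Fintype.card_option, Fintype.card_bool, pow_succ] at hlists ⊢
  omega

end Multiplexor

theorem statement4_general (m n : ℕ) (f : BFunc m) (d : ℕ)
    (P : HDProt (AliceMux m n f) (BobMux m n f) (Option (Fin m × Fin n)) d)
    (hsol : P.Solves (MuxDiam f)) (hphd : P.PartiallyHD muxGA muxGB)
    (tr : List Bool) (htr : P.IsTranscript tr)
    (hchi : (4 : ℕ∞) ≤ (charGraphDiamHD P tr (VpiHD P tr)).chromaticNumber) :
    (tr.length : ℝ) +
        Real.logb 2 (Real.logb 2
          (((charGraphDiamHD P tr (VpiHD P tr)).chromaticNumber.toNat : ℝ))) -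
        Real.logb 2 (Real.logb 2 (Real.logb 2
          (((charGraphDiamHD P tr (VpiHD P tr)).chromaticNumber.toNat : ℝ)))) - 4 ≤
      (d : ℝ) := by
  obtain ⟨⟨x, hx⟩, -⟩ := htr
  have hlen := P.fullA.length_le_of_cons hx
  have hle := chromaticNumber_charGraphDiamHD_le tr hsol hphd (VpiHD P tr)
  set χ := (charGraphDiamHD P tr (VpiHD P tr)).chromaticNumber
  have hfin : χ ≠ ⊤ := ne_top_of_le_ne_top (ENat.natCast_ne_top _) hle
  have hlow : (4 : ℝ) ≤ χ.toNat := by exact_mod_cast ENat.toNat_le_toNat hchi hfin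
  have hup : (χ.toNat : ℝ) ≤ 2 ^ 2 ^ (d - tr.length + 3) := by
    exact_mod_cast ENat.toNat_le_toNat hle (ENat.natCast_ne_top _)
  have hloglog := logb_logb_le_of_le_two_pow_two_pow (by linarith) hup
  have hlogloglog := logb_logb_logb_nonneg hlow
  push_cast [Nat.cast_sub hlen] at hloglog
  linarith

theorem statement4 (m n : ℕ) (f : BFunc m) (hf : NonConst f) (d : ℕ)
    (P : HDProt (AliceMux m n f) (BobMux m n f) (Option (Fin m × Fin n)) d)
    (hsol : P.Solves (MuxDiam f)) (hphd : P.PartiallyHD muxGA muxGB)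
    (tr : List Bool) (htr : P.IsTranscript tr) (hV : (VpiHD P tr).Nonempty)
    (hchi : (4 : ℕ∞) ≤ (charGraphDiamHD P tr (VpiHD P tr)).chromaticNumber) :
    (tr.length : ℝ) +
        Real.logb 2 (Real.logb 2
          (((charGraphDiamHD P tr (VpiHD P tr)).chromaticNumber.toNat : ℝ))) -
        Real.logb 2 (Real.logb 2 (Real.logb 2
          (((charGraphDiamHD P tr (VpiHD P tr)).chromaticNumber.toNat : ℝ)))) - 4 ≤
      (d : ℝ) :=
  statement4_general m n f d P hsol hphd tr htr hchi
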